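/- For every prime p, every n ≥ 1, every integer k with 1 ≤ k ≤ p, and every m ∈ ℕ, there exists a function Ext : 𝔽_p^n → {0,1}^m such that for every k-AP source X = {a + t·b : t ∈ ℤ, 0 ≤ t ≤ k−1} ⊆ 𝔽_p^n with a, b ∈ 𝔽_p^n and b ≠ 0, the statistical distance between Ext(X) and the uniform distribution U_m on {0,1}^m is at most 16·(log₂ p)²·√(n·p)·2^{m/2}/k. -/

import Mathlib

open Finset

lemma exp_le_sq {x : ℝ} (h0 : 0 ≤ x) (h1 : x ≤ 1) : Real.exp x ≤ 1 + x + x^2 := by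
  have h := Real.exp_bound (by rw [abs_of_nonneg h0]; exact h1) (n := 2) (by norm_num)
  rw [abs_of_nonneg h0] at h
  simp [Finset.sum_range_succ, Nat.factorial] at h
  rw [abs_le] at h
  nlinarith [h.1, h.2]

lemma bern_mgf {q l : ℝ} (hq0 : 0 ≤ q) (hq1 : q ≤ 1) (hl0 : 0 ≤ l) (hl1 : l ≤ 1) :
    q * Real.exp l + (1 - q) ≤ Real.exp (l * q + l ^ 2) := by
  have h1 : Real.exp l ≤ 1 + l + l ^ 2 := exp_le_sq hl0 hl1
  have h2 : (l * q + l ^ 2) + 1 ≤ Real.exp (l * q + l ^ 2) := Real.add_one_le_exp _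
  nlinarith [sq_nonneg l, mul_nonneg hq0 (sq_nonneg l)]


/-- Statistical distance between the distribution of `F` applied to a uniform
element of the finite set `X` and the uniform distribution on `β`. -/
noncomputable def statDist {α β : Type*} [Fintype β] [DecidableEq β]
    (X : Finset α) (F : α → β) : ℝ :=
  (1/2) * ∑ y : β, |((X.filter (fun x => F x = y)).card : ℝ) / (X.card : ℝ)
    - 1 / (Fintype.card β : ℝ)|

section SD
variable {α β : Type*} [Fintype β] [DecidableEq β] (X : Finset α) (F : α → β)

lemma sum_fibers : ∑ y : β, ((X.filter fun x => F x = y).card : ℝ) = X.card := by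
  rw [← Nat.cast_sum]
  congr 1
  exact (Finset.card_eq_sum_card_fiberwise (f := F) (fun x _ => mem_univ (F x))).symm

lemma statDist_le_one (hX : X.card ≠ 0) (hβ : Fintype.card β ≠ 0) :
    statDist X F ≤ 1 := by
  have hXp : (0:ℝ) < X.card := by positivity
  have hβp : (0:ℝ) < Fintype.card β := by positivity
  have hb : ∀ y : β, |((X.filter fun x => F x = y).card : ℝ) / X.card
      - 1 / Fintype.card β| ≤ ((X.filter fun x => F x = y).card : ℝ) / X.card
      + 1 / Fintype.card β := fun y => by
    have h1 : (0:ℝ) ≤ ((X.filter fun x => F x = y).card : ℝ) / X.card := by positivity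
    have h2 : (0:ℝ) ≤ 1 / (Fintype.card β : ℝ) := by positivity
    rw [abs_sub_le_iff]; constructor <;> nlinarith
  calc statDist X F ≤ (1/2) * ∑ y : β, (((X.filter fun x => F x = y).card : ℝ) / X.card
      + 1 / Fintype.card β) := by
        unfold statDist
        gcongr with y _
        exact hb y
    _ = 1 := by
        rw [Finset.sum_add_distrib, ← Finset.sum_div, sum_fibers, Finset.sum_const, Finset.card_univ, nsmul_eq_mul]
        field_simp
        norm_num

lemma card_filter_mem_eq_sum (S : Finset β) :
    ((X.filter fun x => F x ∈ S).card : ℝ)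
      = ∑ y ∈ S, ((X.filter fun x => F x = y).card : ℝ) := by
  rw [← Nat.cast_sum]
  congr 1
  rw [Finset.card_eq_sum_card_fiberwise (f := F) (s := X.filter fun x => F x ∈ S) (t := S)
    (fun x hx => (mem_filter.mp hx).2)]
  refine Finset.sum_congr rfl fun y hy => ?_
  congr 1
  rw [Finset.filter_filter]
  exact Finset.filter_congr fun x _ => ⟨fun h => h.2, fun h => ⟨h ▸ hy, h⟩⟩

lemma statDist_le_of_forall (hX : X.card ≠ 0) (hβ : Fintype.card β ≠ 0) {ε : ℝ}
    (h : ∀ S : Finset β, ((X.filter fun x => F x ∈ S).card : ℝ)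
      ≤ (X.card : ℝ) * S.card / (Fintype.card β : ℝ) + ε * X.card) :
    statDist X F ≤ ε := by
  classical
  have hk : (0:ℝ) < X.card := by positivity
  have hM : (0:ℝ) < Fintype.card β := by positivity
  set u := 1 / (Fintype.card β : ℝ) with hu
  set d : β → ℝ := fun y => ((X.filter fun x => F x = y).card : ℝ) / X.card with hd
  set S := univ.filter (fun y => u < d y) with hS
  have hsum : ∑ y : β, (d y - u) = 0 := by
    rw [Finset.sum_sub_distrib, Finset.sum_const, hd]
    simp only []
    rw [← Finset.sum_div, sum_fibers, hu, Finset.card_univ, nsmul_eq_mul]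
    field_simp
    norm_num
  have hsplit := Finset.sum_filter_add_sum_filter_not univ (fun y => u < d y)
      (fun y => d y - u)
  have habs : ∑ y : β, |d y - u| = 2 * ∑ y ∈ S, (d y - u) := by
    rw [← Finset.sum_filter_add_sum_filter_not univ (fun y => u < d y)
      (fun y => |d y - u|)]
    have h1 : ∑ y ∈ S, |d y - u| = ∑ y ∈ S, (d y - u) :=
      Finset.sum_congr rfl fun y hy =>
        abs_of_pos (sub_pos.mpr (mem_filter.mp hy).2)
    have h2 : ∑ y ∈ univ.filter (fun y => ¬ u < d y), |d y - u|
        = ∑ y ∈ univ.filter (fun y => ¬ u < d y), -(d y - u) :=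
      Finset.sum_congr rfl fun y hy =>
        abs_of_nonpos (sub_nonpos.mpr (le_of_not_gt (mem_filter.mp hy).2))
    rw [h1, h2, Finset.sum_neg_distrib]
    rw [hsum] at hsplit
    linarith
  have hcnt : ∑ y ∈ S, d y = ((X.filter fun x => F x ∈ S).card : ℝ) / X.card := by
    rw [card_filter_mem_eq_sum, Finset.sum_div]
  have hsd : statDist X F = ∑ y ∈ S, (d y - u) := by
    unfold statDist
    rw [habs]; ring
  have hSle := h S
  rw [hsd, Finset.sum_sub_distrib, hcnt, Finset.sum_const, nsmul_eq_mul]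
  have key : ((X.filter fun x => F x ∈ S).card : ℝ) / X.card
      ≤ (S.card : ℝ) / (Fintype.card β : ℝ) + ε := by
    rw [div_le_iff₀ hk]
    calc ((X.filter fun x => F x ∈ S).card : ℝ)
        ≤ (X.card : ℝ) * S.card / (Fintype.card β : ℝ) + ε * X.card := hSle
      _ = ((S.card : ℝ) / (Fintype.card β : ℝ) + ε) * X.card := by ring
  have hq : (S.card : ℝ) * u = (S.card : ℝ) / (Fintype.card β : ℝ) := by
    rw [hu]; ring
  linarith
end SD

section Chernoff
variable {α β : Type*} [Fintype α] [DecidableEq α] [Fintype β] [DecidableEq β]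

lemma mgf_identity (X : Finset α) (S : Finset β) (l : ℝ) :
    ∑ F : α → β, Real.exp (l * ((X.filter fun x => F x ∈ S).card : ℝ))
      = ((Fintype.card β : ℝ)) ^ (Fintype.card α - X.card)
        * ((S.card : ℝ) * Real.exp l + ((Fintype.card β : ℝ) - S.card)) ^ X.card := by
  classical
  have hterm : ∀ F : α → β, Real.exp (l * ((X.filter fun x => F x ∈ S).card : ℝ))
      = ∏ x : α, (if x ∈ X then (if F x ∈ S then Real.exp l else 1) else 1) := by
    intro F
    have h1 : ((X.filter fun x => F x ∈ S).card : ℝ)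
        = ∑ x ∈ X, (if F x ∈ S then (1:ℝ) else 0) := by
      rw [Finset.card_filter]; push_cast; rfl
    rw [h1, Finset.mul_sum, Real.exp_sum, Finset.prod_ite_mem, univ_inter]
    refine Finset.prod_congr rfl fun x _ => ?_
    split_ifs <;> simp
  simp_rw [hterm]
  have hexch : ∑ F : α → β, ∏ x : α,
        (if x ∈ X then (if F x ∈ S then Real.exp l else 1) else 1)
      = ∏ x : α, ∑ v : β, (if x ∈ X then (if v ∈ S then Real.exp l else 1) else 1) := by
    rw [Finset.prod_univ_sum]
    rw [Fintype.piFinset_univ]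
  rw [hexch]
  have hsum : ∀ x : α, ∑ v : β, (if x ∈ X then (if v ∈ S then Real.exp l else 1) else 1)
      = if x ∈ X then ((S.card : ℝ) * Real.exp l + ((Fintype.card β : ℝ) - S.card))
        else (Fintype.card β : ℝ) := by
    intro x
    by_cases hx : x ∈ X <;> simp only [hx, if_true, if_false]
    · rw [Finset.sum_ite, Finset.sum_const, Finset.sum_const, Finset.filter_univ_mem,
        Finset.filter_not, Finset.filter_univ_mem, Finset.card_sdiff_of_subset (subset_univ S),
        card_univ, nsmul_eq_mul, nsmul_eq_mul,
        Nat.cast_sub (Finset.card_le_univ S)]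
      push_cast [card_univ]
      ring
    · simp [card_univ]
  simp_rw [hsum]
  rw [Finset.prod_ite, Finset.prod_const, Finset.prod_const, Finset.filter_univ_mem,
    Finset.filter_not, Finset.filter_univ_mem, Finset.card_sdiff_of_subset (subset_univ X), card_univ]
  ring

lemma chernoff_count [Nonempty β] (X : Finset α) (S : Finset β) {ε : ℝ}
    (hε0 : 0 < ε) (hε2 : ε ≤ 2) :
    ((univ.filter (fun F : α → β =>
        (X.card : ℝ) * S.card / (Fintype.card β : ℝ) + ε * X.card
          < ((X.filter fun x => F x ∈ S).card : ℝ))).card : ℝ)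
      ≤ ((Fintype.card β : ℝ)) ^ (Fintype.card α)
          * Real.exp (-(X.card : ℝ) * ε ^ 2 / 4) := by
  classical
  have hM : (0:ℝ) < Fintype.card β := by
    have := Fintype.card_pos (α := β); positivity
  set l : ℝ := ε / 2 with hldef
  have hl0 : 0 ≤ l := by positivity
  have hl1 : l ≤ 1 := by rw [hldef]; linarith
  set thr : ℝ := (X.card : ℝ) * S.card / (Fintype.card β : ℝ) + ε * X.card with hthr
  set B := univ.filter (fun F : α → β =>
    thr < ((X.filter fun x => F x ∈ S).card : ℝ)) with hB
  have markov : (B.card : ℝ) * Real.exp (l * thr)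
      ≤ ∑ F : α → β, Real.exp (l * ((X.filter fun x => F x ∈ S).card : ℝ)) := by
    calc (B.card : ℝ) * Real.exp (l * thr)
        = ∑ _F ∈ B, Real.exp (l * thr) := by rw [Finset.sum_const, nsmul_eq_mul]
      _ ≤ ∑ F ∈ B, Real.exp (l * ((X.filter fun x => F x ∈ S).card : ℝ)) := by
          refine Finset.sum_le_sum fun F hF => ?_
          exact Real.exp_le_exp.2 (mul_le_mul_of_nonneg_left
            (le_of_lt (mem_filter.mp hF).2) hl0)
      _ ≤ ∑ F : α → β, Real.exp (l * ((X.filter fun x => F x ∈ S).card : ℝ)) :=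
          Finset.sum_le_sum_of_subset_of_nonneg (filter_subset _ _)
            (fun _ _ _ => (Real.exp_pos _).le)
  rw [mgf_identity] at markov
  have hq0 : (0:ℝ) ≤ (S.card : ℝ) / (Fintype.card β : ℝ) := by positivity
  have hq1 : (S.card : ℝ) / (Fintype.card β : ℝ) ≤ 1 := by
    rw [div_le_one hM]
    exact_mod_cast (Finset.card_le_univ S).trans_eq card_univ
  have hbern : (S.card : ℝ) * Real.exp l + ((Fintype.card β : ℝ) - S.card)
      ≤ (Fintype.card β : ℝ)
        * Real.exp (l * ((S.card : ℝ) / (Fintype.card β : ℝ)) + l ^ 2) := by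
    have h := bern_mgf hq0 hq1 hl0 hl1
    calc (S.card : ℝ) * Real.exp l + ((Fintype.card β : ℝ) - S.card)
        = (Fintype.card β : ℝ) * (((S.card : ℝ) / (Fintype.card β : ℝ)) * Real.exp l
            + (1 - (S.card : ℝ) / (Fintype.card β : ℝ))) := by field_simp
      _ ≤ _ := mul_le_mul_of_nonneg_left h hM.le
  have hnn : (0:ℝ) ≤ (S.card : ℝ) * Real.exp l + ((Fintype.card β : ℝ) - S.card) := by
    have h1 : (S.card : ℝ) ≤ (Fintype.card β : ℝ) := by
      exact_mod_cast (Finset.card_le_univ S).trans_eq card_univ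
    have h2 : (0:ℝ) ≤ (S.card : ℝ) * Real.exp l := by positivity
    linarith
  have hpow : ((S.card : ℝ) * Real.exp l + ((Fintype.card β : ℝ) - S.card)) ^ X.card
      ≤ ((Fintype.card β : ℝ)
          * Real.exp (l * ((S.card : ℝ) / (Fintype.card β : ℝ)) + l ^ 2)) ^ X.card :=
    pow_le_pow_left₀ hnn hbern _
  have hkN : X.card ≤ Fintype.card α := Finset.card_le_univ X
  have hcomb : (B.card : ℝ)
      ≤ Real.exp (-(l * thr)) * (((Fintype.card β : ℝ)) ^ (Fintype.card α - X.card)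
        * ((Fintype.card β : ℝ)
          * Real.exp (l * ((S.card : ℝ) / (Fintype.card β : ℝ)) + l ^ 2)) ^ X.card) := by
    have e1 : (B.card : ℝ) = (B.card : ℝ) * Real.exp (l * thr) * Real.exp (-(l * thr)) := by
      rw [mul_assoc, ← Real.exp_add]; simp
    rw [e1]
    rw [mul_comm (Real.exp (-(l * thr)))]
    refine mul_le_mul_of_nonneg_right ?_ (Real.exp_pos _).le
    calc (B.card : ℝ) * Real.exp (l * thr)
        ≤ ((Fintype.card β : ℝ)) ^ (Fintype.card α - X.card)
          * ((S.card : ℝ) * Real.exp l + ((Fintype.card β : ℝ) - S.card)) ^ X.card := markov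
      _ ≤ _ := by
          refine mul_le_mul_of_nonneg_left hpow (by positivity)
  refine hcomb.trans (le_of_eq ?_)
  rw [mul_pow, ← Real.exp_nat_mul]
  have hsplit : ((Fintype.card β : ℝ)) ^ (Fintype.card α - X.card)
      * (((Fintype.card β : ℝ)) ^ X.card) = ((Fintype.card β : ℝ)) ^ (Fintype.card α) := by
    rw [← pow_add, Nat.sub_add_cancel hkN]
  have hexp : Real.exp (-(l * thr))
      * Real.exp ((X.card : ℝ) * (l * ((S.card : ℝ) / (Fintype.card β : ℝ)) + l ^ 2))
      = Real.exp (-(X.card : ℝ) * ε ^ 2 / 4) := by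
    rw [← Real.exp_add]
    congr 1
    rw [hthr, hldef]
    field_simp
    ring
  calc Real.exp (-(l * thr)) * (((Fintype.card β : ℝ)) ^ (Fintype.card α - X.card)
        * (((Fintype.card β : ℝ)) ^ X.card
          * Real.exp ((X.card : ℝ) * (l * ((S.card : ℝ) / (Fintype.card β : ℝ)) + l ^ 2))))
      = (((Fintype.card β : ℝ)) ^ (Fintype.card α - X.card)
          * ((Fintype.card β : ℝ)) ^ X.card)
        * (Real.exp (-(l * thr))
          * Real.exp ((X.card : ℝ) * (l * ((S.card : ℝ) / (Fintype.card β : ℝ)) + l ^ 2))) := by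
        ring
    _ = ((Fintype.card β : ℝ)) ^ (Fintype.card α) * Real.exp (-(X.card : ℝ) * ε ^ 2 / 4) := by
        rw [hsplit, hexp]

end Chernoff

lemma one_le_logb_two {p : ℕ} (hp2 : 2 ≤ p) : 1 ≤ Real.logb 2 (p : ℝ) := by
  have hp0 : (0:ℝ) < p := by positivity
  rw [Real.le_logb_iff_rpow_le one_lt_two hp0, Real.rpow_one]
  exact_mod_cast hp2

lemma card_AP {p : ℕ} (hp : p.Prime) {n k : ℕ} (hk2 : k ≤ p)
    (a b : Fin n → ZMod p) (hb : b ≠ 0) :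
    ((Finset.range k).image (fun t : ℕ => a + t • b)).card = k := by
  haveI : Fact p.Prime := ⟨hp⟩
  rw [Finset.card_image_of_injOn, Finset.card_range]
  intro t ht t' ht' h
  simp only [Finset.coe_range, Set.mem_Iio] at ht ht'
  have h1 : (t : ℕ) • b = (t' : ℕ) • b := by
    exact add_left_cancel h
  have h2 : ((t : ZMod p)) • b = ((t' : ZMod p)) • b := by
    rwa [Nat.cast_smul_eq_nsmul (ZMod p), Nat.cast_smul_eq_nsmul (ZMod p)]
  have h3 : ((t : ZMod p) - (t' : ZMod p)) • b = 0 := by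
    rw [sub_smul, h2, sub_self]
  have h4 : (t : ZMod p) = (t' : ZMod p) := by
    rcases smul_eq_zero.mp h3 with h' | h'
    · exact sub_eq_zero.mp h'
    · exact absurd h' hb
  calc t = ((t : ZMod p)).val := (ZMod.val_cast_of_lt (lt_of_lt_of_le ht hk2)).symm
    _ = ((t' : ZMod p)).val := by rw [h4]
    _ = t' := ZMod.val_cast_of_lt (lt_of_lt_of_le ht' hk2)

lemma numeric_lt {p n k m : ℕ} (hp : p.Prime) (hn : 1 ≤ n) (hk1 : 1 ≤ k) (hk2 : k ≤ p) :
    ((p:ℝ) ^ n) ^ 2 * (2:ℝ) ^ (2 ^ m) * Real.exp (-(k:ℝ) *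
      (16 * (Real.logb 2 (p:ℝ)) ^ 2 * Real.sqrt ((n:ℝ) * (p:ℝ)) * (2:ℝ) ^ ((m:ℝ)/2)
        / (k:ℝ)) ^ 2 / 4) < 1 := by
  have hp2 : (2:ℝ) ≤ p := by exact_mod_cast hp.two_le
  have hp0 : (0:ℝ) < p := by linarith
  have hk0 : (0:ℝ) < k := by exact_mod_cast hk1
  have hn0 : (1:ℝ) ≤ n := by exact_mod_cast hn
  have hkp : (k:ℝ) ≤ p := by exact_mod_cast hk2
  set L := Real.logb 2 (p:ℝ) with hL
  have hL1 : 1 ≤ L := one_le_logb_two (by exact_mod_cast hp.two_le)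
  have hL4 : L ≤ L ^ 4 := by nlinarith [sq_nonneg L, sq_nonneg (L - 1)]
  have hL41 : (1:ℝ) ≤ L ^ 4 := by linarith
  have h2m1 : (1:ℝ) ≤ (2:ℝ) ^ m := one_le_pow₀ (by norm_num)
  have hrpow : ((2:ℝ) ^ ((m:ℝ)/2)) ^ 2 = (2:ℝ) ^ m := by
    rw [← Real.rpow_natCast ((2:ℝ) ^ ((m:ℝ)/2)) 2, ← Real.rpow_mul (by norm_num),
      show (m:ℝ)/2 * (2:ℕ) = (m:ℝ) by push_cast; ring, Real.rpow_natCast]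
  have hsq : Real.sqrt ((n:ℝ) * (p:ℝ)) ^ 2 = (n:ℝ) * p :=
    Real.sq_sqrt (by positivity)
  have hC2 : (16 * L ^ 2 * Real.sqrt ((n:ℝ) * p) * (2:ℝ) ^ ((m:ℝ)/2)) ^ 2
      = 256 * L ^ 4 * ((n:ℝ) * p) * (2:ℝ) ^ m := by
    rw [show (16 * L ^ 2 * Real.sqrt ((n:ℝ) * p) * (2:ℝ) ^ ((m:ℝ)/2)) ^ 2
      = 256 * L ^ 4 * (Real.sqrt ((n:ℝ) * p)) ^ 2 * ((2:ℝ) ^ ((m:ℝ)/2)) ^ 2 from by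
        ring, hsq, hrpow]
  have hexp : -(k:ℝ) * (16 * L ^ 2 * Real.sqrt ((n:ℝ) * (p:ℝ)) * (2:ℝ) ^ ((m:ℝ)/2)
      / (k:ℝ)) ^ 2 / 4 = -(64 * L ^ 4 * ((n:ℝ) * p) * (2:ℝ) ^ m / k) := by
    rw [div_pow, hC2]
    field_simp
    ring
  rw [hexp]
  -- main log inequality
  have hlog2lt : Real.log 2 < 1 := by
    have := Real.log_two_lt_d9; linarith
  have hlog2pos : 0 < Real.log 2 := Real.log_pos (by norm_num)
  have elogp : Real.log (p:ℝ) = L * Real.log 2 := by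
    rw [hL, Real.logb]; field_simp
  have hc1 : 64 * L ^ 4 * (n:ℝ) * (2:ℝ) ^ m ≤ 64 * L ^ 4 * ((n:ℝ) * p) * (2:ℝ) ^ m / k := by
    rw [le_div_iff₀ hk0]
    have h0 : (0:ℝ) ≤ 64 * L ^ 4 * (n:ℝ) * (2:ℝ) ^ m := by positivity
    nlinarith [mul_nonneg h0 (by linarith : (0:ℝ) ≤ (p:ℝ) - k)]
  have hlogA : Real.log (((p:ℝ) ^ n) ^ 2 * (2:ℝ) ^ (2 ^ m))
      = 2 * (n:ℝ) * Real.log p + (2:ℝ) ^ m * Real.log 2 := by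
    rw [Real.log_mul (by positivity) (by positivity), Real.log_pow, Real.log_pow,
      Real.log_pow]
    push_cast
    ring
  have hkey : Real.log (((p:ℝ) ^ n) ^ 2 * (2:ℝ) ^ (2 ^ m))
      < 64 * L ^ 4 * ((n:ℝ) * p) * (2:ℝ) ^ m / k := by
    refine lt_of_lt_of_le ?_ hc1
    rw [hlogA, elogp]
    have hLlog : L * Real.log 2 ≤ L := by
      have := mul_le_mul_of_nonneg_left hlog2lt.le (show (0:ℝ) ≤ L by linarith)
      simpa using this
    have t1 : 2 * (n:ℝ) * (L * Real.log 2) ≤ 2 * (n:ℝ) * L :=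
      mul_le_mul_of_nonneg_left hLlog (by positivity)
    have h1 : L ≤ L ^ 4 * (2:ℝ) ^ m := by
      calc L ≤ L ^ 4 := hL4
        _ ≤ L ^ 4 * (2:ℝ) ^ m := le_mul_of_one_le_right (by positivity) h2m1
    have t2 : 2 * (n:ℝ) * L ≤ 2 * ((n:ℝ) * (L ^ 4 * (2:ℝ) ^ m)) := by
      have := mul_le_mul_of_nonneg_left h1 (show (0:ℝ) ≤ (n:ℝ) by positivity)
      linarith
    have h2 : (1:ℝ) ≤ (n:ℝ) * L ^ 4 := by
      have := mul_le_mul hn0 hL41 (by norm_num) (by positivity)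
      simpa using this
    have t3 : (2:ℝ) ^ m * Real.log 2 < (n:ℝ) * (L ^ 4 * (2:ℝ) ^ m) := by
      have h3 : (0:ℝ) < (2:ℝ) ^ m := by positivity
      calc (2:ℝ) ^ m * Real.log 2 < (2:ℝ) ^ m * ((n:ℝ) * L ^ 4) :=
            mul_lt_mul_of_pos_left (lt_of_lt_of_le hlog2lt h2) h3
        _ = (n:ℝ) * (L ^ 4 * (2:ℝ) ^ m) := by ring
    have hP : (0:ℝ) ≤ (n:ℝ) * (L ^ 4 * (2:ℝ) ^ m) := by positivity
    have heq : 64 * L ^ 4 * (n:ℝ) * (2:ℝ) ^ m = 64 * ((n:ℝ) * (L ^ 4 * (2:ℝ) ^ m)) := by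
      ring
    rw [heq]
    linarith
  have hmain : ((p:ℝ) ^ n) ^ 2 * (2:ℝ) ^ (2 ^ m)
      < Real.exp (64 * L ^ 4 * ((n:ℝ) * p) * (2:ℝ) ^ m / k) :=
    (Real.log_lt_iff_lt_exp (by positivity)).mp hkey
  calc ((p:ℝ) ^ n) ^ 2 * (2:ℝ) ^ (2 ^ m)
        * Real.exp (-(64 * L ^ 4 * ((n:ℝ) * p) * (2:ℝ) ^ m / k))
      < Real.exp (64 * L ^ 4 * ((n:ℝ) * p) * (2:ℝ) ^ m / k)
        * Real.exp (-(64 * L ^ 4 * ((n:ℝ) * p) * (2:ℝ) ^ m / k)) :=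
        mul_lt_mul_of_pos_right hmain (Real.exp_pos _)
    _ = 1 := by rw [← Real.exp_add]; simp

theorem stmt_17 (p : ℕ) (hp : p.Prime) (n : ℕ) (hn : 1 ≤ n)
    (k : ℕ) (hk1 : 1 ≤ k) (hk2 : k ≤ p) (m : ℕ) :
    ∃ Ext : (Fin n → ZMod p) → (Fin m → Bool),
      ∀ a b : Fin n → ZMod p, b ≠ 0 →
        statDist ((Finset.range k).image (fun t : ℕ => a + t • b)) Ext
          ≤ 16 * (Real.logb 2 (p:ℝ))^2 * Real.sqrt ((n:ℝ) * (p:ℝ))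
              * (2:ℝ)^((m:ℝ)/2) / (k:ℝ) := by
  classical
  haveI : NeZero p := ⟨hp.pos.ne'⟩
  have hp2 := hp.two_le
  have hL1 : 1 ≤ Real.logb 2 (p:ℝ) := one_le_logb_two hp2
  have hk0 : (0:ℝ) < k := by exact_mod_cast hk1
  set ε := 16 * (Real.logb 2 (p:ℝ))^2 * Real.sqrt ((n:ℝ) * (p:ℝ))
      * (2:ℝ)^((m:ℝ)/2) / (k:ℝ) with hεdef
  have hε0 : 0 < ε := by
    rw [hεdef]
    apply div_pos ?_ hk0
    have hnp : (0:ℝ) < (n:ℝ) * (p:ℝ) := by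
      have h1 : (0:ℝ) < n := by exact_mod_cast hn
      have h2 : (0:ℝ) < p := by exact_mod_cast hp.pos
      positivity
    have h1 : (0:ℝ) < Real.sqrt ((n:ℝ) * (p:ℝ)) := Real.sqrt_pos.mpr hnp
    have h2 : (0:ℝ) < (2:ℝ) ^ ((m:ℝ)/2) := Real.rpow_pos_of_pos (by norm_num) _
    have hLpos : (0:ℝ) < Real.logb 2 (p:ℝ) := lt_of_lt_of_le one_pos hL1
    exact mul_pos (mul_pos (mul_pos (by norm_num) (pow_pos hLpos 2)) h1) h2
  have hcardβ : Fintype.card (Fin m → Bool) = 2 ^ m := by simp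
  have hcardα : Fintype.card (Fin n → ZMod p) = p ^ n := by simp [ZMod.card]
  have hXcard : ∀ a b : Fin n → ZMod p, b ≠ 0 →
      ((Finset.range k).image (fun t : ℕ => a + t • b)).card = k :=
    fun a b hb => card_AP hp hk2 a b hb
  by_cases hcase : 1 ≤ ε
  · exact ⟨fun _ _ => false, fun a b hb =>
      (statDist_le_one _ _ (by rw [hXcard a b hb]; omega)
        (by rw [hcardβ]; positivity)).trans hcase⟩
  · push_neg at hcase
    have hε2 : ε ≤ 2 := by linarith
    set T : Finset (((Fin n → ZMod p) × (Fin n → ZMod p)) × Finset (Fin m → Bool)) :=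
      univ.filter (fun w => w.1.2 ≠ 0) with hT
    set Bad : ((Fin n → ZMod p) × (Fin n → ZMod p)) × Finset (Fin m → Bool)
        → Finset ((Fin n → ZMod p) → (Fin m → Bool)) := fun w =>
      univ.filter (fun F : (Fin n → ZMod p) → (Fin m → Bool) =>
        ((((Finset.range k).image (fun t : ℕ => w.1.1 + t • w.1.2)).card : ℝ)
            * (w.2.card) / (Fintype.card (Fin m → Bool) : ℝ)
          + ε * (((Finset.range k).image (fun t : ℕ => w.1.1 + t • w.1.2)).card : ℝ)
        < (((((Finset.range k).image (fun t : ℕ => w.1.1 + t • w.1.2)).filter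
            fun x => F x ∈ w.2).card : ℝ)))) with hBad
    have hBadcard : ∀ w ∈ T, ((Bad w).card : ℝ)
        ≤ ((2:ℝ)^m) ^ (p^n) * Real.exp (-(k:ℝ) * ε ^ 2 / 4) := by
      intro w hw
      have hb : w.1.2 ≠ 0 := (mem_filter.mp hw).2
      have h := chernoff_count ((Finset.range k).image (fun t : ℕ => w.1.1 + t • w.1.2))
        w.2 hε0 hε2
      have e : ((Fintype.card (Fin m → Bool) : ℝ)) ^ (Fintype.card (Fin n → ZMod p))
          * Real.exp (-((((Finset.range k).image (fun t : ℕ => w.1.1 + t • w.1.2)).card : ℝ))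
            * ε ^ 2 / 4)
          = ((2:ℝ)^m) ^ (p^n) * Real.exp (-(k:ℝ) * ε ^ 2 / 4) := by
        rw [hXcard w.1.1 w.1.2 hb, hcardα, hcardβ]
        push_cast
        ring
      exact h.trans (le_of_eq e)
    have hcount : ((T.biUnion Bad).card : ℝ)
        ≤ (T.card : ℝ) * (((2:ℝ)^m) ^ (p^n) * Real.exp (-(k:ℝ) * ε ^ 2 / 4)) := by
      calc ((T.biUnion Bad).card : ℝ)
          ≤ ((∑ w ∈ T, (Bad w).card : ℕ) : ℝ) := by
            exact_mod_cast Finset.card_biUnion_le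
        _ = ∑ w ∈ T, ((Bad w).card : ℝ) := by push_cast; rfl
        _ ≤ ∑ _w ∈ T, (((2:ℝ)^m) ^ (p^n) * Real.exp (-(k:ℝ) * ε ^ 2 / 4)) :=
            Finset.sum_le_sum hBadcard
        _ = _ := by rw [Finset.sum_const, nsmul_eq_mul]
    have hTcard : (T.card : ℝ) ≤ ((p:ℝ)^n)^2 * (2:ℝ)^(2^m) := by
      have h1 : T.card ≤ Fintype.card
          (((Fin n → ZMod p) × (Fin n → ZMod p)) × Finset (Fin m → Bool)) :=
        (Finset.card_le_univ T).trans_eq card_univ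
      have h2 : Fintype.card (((Fin n → ZMod p) × (Fin n → ZMod p)) × Finset (Fin m → Bool))
          = (p^n * p^n) * 2^(2^m) := by
        rw [Fintype.card_prod, Fintype.card_prod, Fintype.card_finset, hcardα, hcardβ]
      calc (T.card : ℝ) ≤ (((p^n * p^n) * 2^(2^m) : ℕ) : ℝ) := by
            exact_mod_cast h1.trans_eq h2
        _ = ((p:ℝ)^n)^2 * (2:ℝ)^(2^m) := by push_cast; ring
    have hfun : (Fintype.card ((Fin n → ZMod p) → Fin m → Bool) : ℝ)
        = ((2:ℝ)^m) ^ (p^n) := by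
      rw [Fintype.card_fun, hcardα, hcardβ]
      push_cast
      ring
    have hpow0 : (0:ℝ) < ((2:ℝ)^m) ^ (p^n) := by positivity
    have hnum := numeric_lt (m := m) hp hn hk1 hk2
    have hlt : ((T.biUnion Bad).card : ℝ)
        < (Fintype.card ((Fin n → ZMod p) → Fin m → Bool) : ℝ) := by
      rw [hfun]
      calc ((T.biUnion Bad).card : ℝ)
          ≤ (T.card : ℝ) * (((2:ℝ)^m) ^ (p^n) * Real.exp (-(k:ℝ) * ε ^ 2 / 4)) := hcount
        _ ≤ (((p:ℝ)^n)^2 * (2:ℝ)^(2^m))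
            * (((2:ℝ)^m) ^ (p^n) * Real.exp (-(k:ℝ) * ε ^ 2 / 4)) := by
            refine mul_le_mul_of_nonneg_right hTcard (by positivity)
        _ = (((p:ℝ)^n)^2 * (2:ℝ)^(2^m) * Real.exp (-(k:ℝ) * ε ^ 2 / 4))
            * (((2:ℝ)^m) ^ (p^n)) := by ring
        _ < 1 * (((2:ℝ)^m) ^ (p^n)) := by
            refine mul_lt_mul_of_pos_right ?_ hpow0
            exact hnum
        _ = ((2:ℝ)^m) ^ (p^n) := one_mul _
    have hex : ∃ F : (Fin n → ZMod p) → (Fin m → Bool), F ∉ T.biUnion Bad := by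
      by_contra hall
      push_neg at hall
      have hsub : (univ : Finset ((Fin n → ZMod p) → Fin m → Bool)) ⊆ T.biUnion Bad :=
        fun F _ => hall F
      have hc := Finset.card_le_card hsub
      rw [card_univ] at hc
      exact absurd hlt (not_lt.mpr (by exact_mod_cast hc))
    obtain ⟨F, hF⟩ := hex
    refine ⟨F, fun a b hb => ?_⟩
    apply statDist_le_of_forall
    · rw [hXcard a b hb]; omega
    · rw [hcardβ]; positivity
    · intro S
      by_contra hgt
      push_neg at hgt
      apply hF
      refine mem_biUnion.mpr ⟨((a, b), S), mem_filter.mpr ⟨mem_univ _, hb⟩,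
        mem_filter.mpr ⟨mem_univ _, ?_⟩⟩
      exact hgt
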